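/- Suppose asset j is dominant and let K ∈ 𝒦 with K_j > 0. Then for every n ≥ 1 the optimality gap satisfies the sharpened upper bound g_1* − g_n(K) ≤ (1/n)·( log(1/K_j) − 1 + K_j·E[ R_{n,j} / (Kᵀ R_n) ] ), where g_1* = E[log(1 + X_j(0))]. -/

import Mathlib

open MeasureTheory ProbabilityTheory Filter Topology Finset Real

/-- Compound (total) return of asset `i` over the first `n` periods:
`R_{n,i}(ω) = ∏_{k=0}^{n-1} (1 + X_i(k)(ω))`. -/
noncomputable def compoundReturn {Ω : Type*} {m : ℕ} (X : ℕ → Ω → Fin m → ℝ)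
    (n : ℕ) (ω : Ω) (i : Fin m) : ℝ :=
  ∏ k ∈ Finset.range n, (1 + X k ω i)

/-- Expected logarithmic growth with rebalancing period `n`:
`g_n(K) = (1/n) E[log (Kᵀ R_n)]`. -/
noncomputable def elg {Ω : Type*} [MeasureSpace Ω] {m : ℕ} (X : ℕ → Ω → Fin m → ℝ)
    (n : ℕ) (K : Fin m → ℝ) : ℝ :=
  (n : ℝ)⁻¹ * ∫ ω, Real.log (∑ i, K i * compoundReturn X n ω i)

/-- The admissible set: the unit simplex in `ℝ^m`. -/
def simplex (m : ℕ) : Set (Fin m → ℝ) := {K | (∀ i, 0 ≤ K i) ∧ ∑ i, K i = 1}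

/-!
Since `log x ≤ x - 1`, applied to `x = K_j R_{n,j} / (Kᵀ R_n)`, we have pointwise
`log R_{n,j} - log (Kᵀ R_n) ≤ log (1 / K_j) - 1 + K_j R_{n,j} / (Kᵀ R_n)`.
Taking expectations gives the bound, since `E[log R_{n,j}] = n g_1*` by identical distribution of
the factors `1 + X_j(k)`; all integrands are bounded because the returns are.
-/

lemma log_sub_log_le_log_one_div_sub_one_add_mul {a s c : ℝ} (ha : 0 < a) (hs : 0 < s)
    (hc : 0 < c) : log a - log s ≤ log (1 / c) - 1 + c * (a / s) := by
  have h := log_le_sub_one_of_pos (mul_pos hc (div_pos ha hs))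
  rw [log_mul hc.ne' (div_pos ha hs).ne', log_div ha.ne' hs.ne'] at h
  rw [one_div, log_inv]
  linarith

lemma integral_log_sub_integral_log_le {α : Type*} [MeasurableSpace α] {μ : Measure α}
    [IsProbabilityMeasure μ] {f g : α → ℝ} {c : ℝ} (hc : 0 < c)
    (hf : ∀ᵐ x ∂μ, 0 < f x) (hg : ∀ᵐ x ∂μ, 0 < g x)
    (hlogf : Integrable (fun x => log (f x)) μ) (hlogg : Integrable (fun x => log (g x)) μ)
    (hfg : Integrable (fun x => f x / g x) μ) :
    (∫ x, log (f x) ∂μ) - ∫ x, log (g x) ∂μ ≤ log (1 / c) - 1 + c * ∫ x, f x / g x ∂μ := by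
  calc (∫ x, log (f x) ∂μ) - ∫ x, log (g x) ∂μ = ∫ x, log (f x) - log (g x) ∂μ :=
        (integral_sub hlogf hlogg).symm
    _ ≤ ∫ x, log (1 / c) - 1 + c * (f x / g x) ∂μ := by
        refine integral_mono_ae (hlogf.sub hlogg) ((integrable_const _).add (hfg.const_mul c)) ?_
        filter_upwards [hf, hg] with x hfx hgx
        exact log_sub_log_le_log_one_div_sub_one_add_mul hfx hgx hc
    _ = _ := by
        rw [integral_add (integrable_const _) (hfg.const_mul c), integral_const, integral_const_mul]
        simp

lemma integrable_log_of_ae_mem_Icc {α : Type*} [MeasurableSpace α] {μ : Measure α}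
    [IsFiniteMeasure μ] {f : α → ℝ} {a b : ℝ} (hf : AEMeasurable f μ) (ha : 0 < a)
    (hab : ∀ᵐ x ∂μ, f x ∈ Set.Icc a b) : Integrable (fun x => log (f x)) μ :=
  .of_mem_Icc (log a) (log b) hf.log <| hab.mono fun _ hx =>
    ⟨log_le_log ha hx.1, log_le_log (ha.trans_le hx.1) hx.2⟩

section compoundReturn

variable {Ω : Type*} {m : ℕ} {X : ℕ → Ω → Fin m → ℝ}

lemma measurable_compoundReturn [MeasurableSpace Ω] (hmeas : ∀ k, Measurable (X k)) (n : ℕ)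
    (i : Fin m) : Measurable fun ω => compoundReturn X n ω i :=
  Finset.measurable_prod _ fun k _ => measurable_const.add ((measurable_pi_apply i).comp (hmeas k))

lemma compoundReturn_mem_Icc {n : ℕ} {ω : Ω} {i : Fin m} {a b : ℝ} (ha : 0 < 1 + a)
    (hX : ∀ k, a ≤ X k ω i ∧ X k ω i ≤ b) :
    compoundReturn X n ω i ∈ Set.Icc ((1 + a) ^ n) ((1 + b) ^ n) := by
  constructor
  · calc (1 + a) ^ n = ∏ _k ∈ range n, (1 + a) := by rw [prod_const, card_range]
      _ ≤ compoundReturn X n ω i :=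
        prod_le_prod (fun _ _ => ha.le) fun k _ => by linarith [(hX k).1]
  · calc compoundReturn X n ω i ≤ ∏ _k ∈ range n, (1 + b) :=
        prod_le_prod (fun k _ => by linarith [(hX k).1]) fun k _ => by linarith [(hX k).2]
      _ = (1 + b) ^ n := by rw [prod_const, card_range]

lemma log_compoundReturn {n : ℕ} {ω : Ω} {i : Fin m} (hX : ∀ k, 0 < 1 + X k ω i) :
    log (compoundReturn X n ω i) = ∑ k ∈ range n, log (1 + X k ω i) := by
  rw [compoundReturn, log_prod fun k _ => (hX k).ne']

lemma integral_log_compoundReturn [MeasureSpace Ω] [IsProbabilityMeasure (ℙ : Measure Ω)]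
    (hmeas : ∀ k, Measurable (X k)) (hident : ∀ k, IdentDistrib (X k) (X 0) ℙ ℙ)
    {Xmin Xmax : Fin m → ℝ} (hXmin : ∀ i, -1 < Xmin i)
    (hbdd : ∀ k, ∀ᵐ ω ∂(ℙ : Measure Ω), ∀ i, Xmin i ≤ X k ω i ∧ X k ω i ≤ Xmax i)
    (n : ℕ) (i : Fin m) :
    ∫ ω, log (compoundReturn X n ω i) = n * ∫ ω, log (1 + X 0 ω i) := by
  have hmeas_i : ∀ k, Measurable fun ω => 1 + X k ω i :=
    fun k => measurable_const.add ((measurable_pi_apply i).comp (hmeas k))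
  have hint : ∀ k, Integrable (fun ω => log (1 + X k ω i)) := fun k =>
    integrable_log_of_ae_mem_Icc (hmeas_i k).aemeasurable (a := 1 + Xmin i) (b := 1 + Xmax i)
      (by linarith [hXmin i]) (by filter_upwards [hbdd k] with ω hω; simpa using hω i)
  have hident_i : ∀ k, ∫ ω, log (1 + X k ω i) = ∫ ω, log (1 + X 0 ω i) := fun k =>
    ((hident k).comp (measurable_const.add (measurable_pi_apply i)).log :).integral_eq
  calc ∫ ω, log (compoundReturn X n ω i)
      = ∫ ω, ∑ k ∈ range n, log (1 + X k ω i) := by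
        refine integral_congr_ae ?_
        filter_upwards [ae_all_iff.mpr hbdd] with ω hω
        exact log_compoundReturn fun k => by linarith [hXmin i, (hω k i).1]
    _ = n * ∫ ω, log (1 + X 0 ω i) := by
        simp [integral_finsetSum _ fun k _ => hint k, hident_i]

lemma ae_compoundReturn_mem_Icc [MeasureSpace Ω] {Xmin Xmax : Fin m → ℝ}
    (hXmin : ∀ i, -1 < Xmin i)
    (hbdd : ∀ k, ∀ᵐ ω ∂(ℙ : Measure Ω), ∀ i, Xmin i ≤ X k ω i ∧ X k ω i ≤ Xmax i) (n : ℕ) :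
    ∀ᵐ ω ∂(ℙ : Measure Ω), ∀ i,
      compoundReturn X n ω i ∈ Set.Icc ((1 + Xmin i) ^ n) ((1 + Xmax i) ^ n) := by
  filter_upwards [ae_all_iff.mpr hbdd] with ω hω i
  exact compoundReturn_mem_Icc (by linarith [hXmin i]) fun k => hω k i

lemma mul_compoundReturn_le_sum {n : ℕ} {ω : Ω} {K : Fin m → ℝ} (hK : ∀ i, 0 ≤ K i)
    (hR : ∀ i, 0 ≤ compoundReturn X n ω i) (j : Fin m) :
    K j * compoundReturn X n ω j ≤ ∑ i, K i * compoundReturn X n ω i :=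
  single_le_sum (f := fun i => K i * compoundReturn X n ω i)
    (fun i _ => mul_nonneg (hK i) (hR i)) (mem_univ j)

lemma ae_sum_mul_compoundReturn_mem_Icc [MeasureSpace Ω] {Xmin Xmax : Fin m → ℝ}
    (hXmin : ∀ i, -1 < Xmin i)
    (hbdd : ∀ k, ∀ᵐ ω ∂(ℙ : Measure Ω), ∀ i, Xmin i ≤ X k ω i ∧ X k ω i ≤ Xmax i)
    {K : Fin m → ℝ} (hK : ∀ i, 0 ≤ K i) (n : ℕ) (j : Fin m) :
    ∀ᵐ ω ∂(ℙ : Measure Ω), ∑ i, K i * compoundReturn X n ω i ∈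
      Set.Icc (K j * (1 + Xmin j) ^ n) (∑ i, K i * (1 + Xmax i) ^ n) := by
  filter_upwards [ae_compoundReturn_mem_Icc hXmin hbdd n] with ω hR
  have hR0 : ∀ i, 0 ≤ compoundReturn X n ω i :=
    fun i => (pow_pos (by linarith [hXmin i]) n).le.trans (hR i).1
  exact ⟨(mul_le_mul_of_nonneg_left (hR j).1 (hK j)).trans (mul_compoundReturn_le_sum hK hR0 j),
    sum_le_sum fun i _ => mul_le_mul_of_nonneg_left (hR i).2 (hK i)⟩

lemma ae_compoundReturn_div_sum_mem_Icc [MeasureSpace Ω] {Xmin Xmax : Fin m → ℝ}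
    (hXmin : ∀ i, -1 < Xmin i)
    (hbdd : ∀ k, ∀ᵐ ω ∂(ℙ : Measure Ω), ∀ i, Xmin i ≤ X k ω i ∧ X k ω i ≤ Xmax i)
    {K : Fin m → ℝ} (hK : ∀ i, 0 ≤ K i) {j : Fin m} (hKj : 0 < K j) (n : ℕ) :
    ∀ᵐ ω ∂(ℙ : Measure Ω), compoundReturn X n ω j / ∑ i, K i * compoundReturn X n ω i ∈
      Set.Icc 0 (K j)⁻¹ := by
  filter_upwards [ae_compoundReturn_mem_Icc hXmin hbdd n] with ω hR
  have hRpos : ∀ i, 0 < compoundReturn X n ω i :=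
    fun i => (pow_pos (by linarith [hXmin i]) n).trans_le (hR i).1
  have hle := mul_compoundReturn_le_sum hK (fun i => (hRpos i).le) j
  have hSpos := (mul_pos hKj (hRpos j)).trans_le hle
  exact ⟨div_nonneg (hRpos j).le hSpos.le,
    (div_le_iff₀ hSpos).2 ((le_inv_mul_iff₀ hKj).2 hle)⟩

end compoundReturn

theorem buy_and_hold_gap_sharp_upper_bound_general
    {Ω : Type*} [MeasureSpace Ω] [IsProbabilityMeasure (ℙ : Measure Ω)]
    {m : ℕ}
    (X : ℕ → Ω → Fin m → ℝ)
    (hmeas : ∀ k, Measurable (X k))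
    (hident : ∀ k, IdentDistrib (X k) (X 0) ℙ ℙ)
    (Xmin Xmax : Fin m → ℝ)
    (hXmin : ∀ i, -1 < Xmin i)
    (hbdd : ∀ k, ∀ᵐ ω ∂(ℙ : Measure Ω), ∀ i, Xmin i ≤ X k ω i ∧ X k ω i ≤ Xmax i)
    (j : Fin m)
    (K : Fin m → ℝ) (hK : K ∈ simplex m) (hKj : 0 < K j) :
    ∀ n : ℕ, 1 ≤ n →
      (∫ ω, Real.log (1 + X 0 ω j)) - elg X n K ≤
        (n : ℝ)⁻¹ * (Real.log (1 / K j) - 1 +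
          K j * ∫ ω, compoundReturn X n ω j / ∑ i, K i * compoundReturn X n ω i) := by
  intro n hn
  set S : Ω → ℝ := fun ω => ∑ i, K i * compoundReturn X n ω i
  have hRj := measurable_compoundReturn hmeas n j
  have hSmeas : Measurable S :=
    Finset.measurable_sum _ fun i _ => (measurable_compoundReturn hmeas n i).const_mul _
  have hRj_lo : 0 < (1 + Xmin j) ^ n := pow_pos (by linarith [hXmin j]) n
  have hS_lo : 0 < K j * (1 + Xmin j) ^ n := mul_pos hKj hRj_lo
  have hRj_mem := (ae_compoundReturn_mem_Icc hXmin hbdd n).mono fun _ h => h j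
  have hS_mem := ae_sum_mul_compoundReturn_mem_Icc hXmin hbdd hK.1 n j
  have key := integral_log_sub_integral_log_le hKj
    (hRj_mem.mono fun _ h => hRj_lo.trans_le h.1) (hS_mem.mono fun _ h => hS_lo.trans_le h.1)
    (integrable_log_of_ae_mem_Icc hRj.aemeasurable hRj_lo hRj_mem)
    (integrable_log_of_ae_mem_Icc hSmeas.aemeasurable hS_lo hS_mem)
    (.of_mem_Icc 0 (K j)⁻¹ (hRj.div hSmeas).aemeasurable
      (ae_compoundReturn_div_sum_mem_Icc hXmin hbdd hK.1 hKj n))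
  rw [integral_log_compoundReturn hmeas hident hXmin hbdd] at key
  have hn_pos : (0 : ℝ) < n := by exact_mod_cast hn
  calc (∫ ω, log (1 + X 0 ω j)) - elg X n K
      = (n : ℝ)⁻¹ * (n * (∫ ω, log (1 + X 0 ω j)) - ∫ ω, log (S ω)) := by
        simp only [elg, S]; field_simp
    _ ≤ _ := by gcongr

/-- **Sharpened upper bound** on the optimality gap: if asset `j` is dominant and `K_j > 0`,
then `g_1^* - g_n(K) ≤ (1/n)(log(1/K_j) - 1 + K_j · E[R_{n,j}/(Kᵀ R_n)])`. -/
theorem buy_and_hold_gap_sharp_upper_bound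
    {Ω : Type*} [MeasureSpace Ω] [IsProbabilityMeasure (ℙ : Measure Ω)]
    {m : ℕ} (hm : 2 ≤ m)
    (X : ℕ → Ω → Fin m → ℝ)
    (hmeas : ∀ k, Measurable (X k))
    (hiid : iIndepFun X ℙ)
    (hident : ∀ k, IdentDistrib (X k) (X 0) ℙ ℙ)
    (Xmin Xmax : Fin m → ℝ)
    (hXmin : ∀ i, -1 < Xmin i)
    (hbdd : ∀ k, ∀ᵐ ω ∂(ℙ : Measure Ω), ∀ i, Xmin i ≤ X k ω i ∧ X k ω i ≤ Xmax i)
    (j : Fin m)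
    (hdom : ∀ i, i ≠ j → ∫ ω, (1 + X 0 ω i) / (1 + X 0 ω j) ≤ 1)
    (K : Fin m → ℝ) (hK : K ∈ simplex m) (hKj : 0 < K j) :
    ∀ n : ℕ, 1 ≤ n →
      (∫ ω, Real.log (1 + X 0 ω j)) - elg X n K ≤
        (n : ℝ)⁻¹ * (Real.log (1 / K j) - 1 +
          K j * ∫ ω, compoundReturn X n ω j / ∑ i, K i * compoundReturn X n ω i) :=
  buy_and_hold_gap_sharp_upper_bound_general X hmeas hident Xmin Xmax hXmin hbdd j K hK hKj
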